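/- Let Y₁ ⪯ Y₂ be symmetric positive definite matrices (Y₂ − Y₁ ⪰ 0), A invertible, W ⪰ 0. Then (A Y₁⁻¹ Aᵀ + W)⁻¹ ⪯ (A Y₂⁻¹ Aᵀ + W)⁻¹, i.e., the Kalman prediction map is monotone in the Loewner order. -/

import Mathlib

/-!
Inversion is order-reversing on positive definite matrices, so `Y ↦ A Y⁻¹ Aᵀ + W` is
order-reversing (congruence by `A` and adding `W` preserve the order), and inverting once more
makes the composite order-preserving.
-/

open Matrix

namespace Matrix

variable {n K : Type*} [Fintype n] [DecidableEq n]
  [Field K] [PartialOrder K] [StarRing K] [AddLeftMono K]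

/-- With `D = Z - X`:
`X⁻¹ - Z⁻¹ = Z⁻¹ D X⁻¹ (X + D) Z⁻¹ = Z⁻¹ D Z⁻¹ + (Z⁻¹ D) X⁻¹ (Z⁻¹ D)ᴴ`,
a sum of congruences of positive semidefinite matrices. -/
theorem PosDef.inv_sub_inv_posSemidef {X Z : Matrix n n K} (hX : X.PosDef)
    (h : (Z - X).PosSemidef) : (X⁻¹ - Z⁻¹).PosSemidef := by
  have hZ : Z.PosDef := by simpa using hX.add_posSemidef h
  have hXu : IsUnit X.det := (isUnit_iff_isUnit_det X).mp hX.isUnit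
  have hZu : IsUnit Z.det := (isUnit_iff_isUnit_det Z).mp hZ.isUnit
  have key : X⁻¹ - Z⁻¹ =
      Z⁻¹ * (Z - X) * Z⁻¹ᴴ + (Z⁻¹ * (Z - X)) * X⁻¹ * (Z⁻¹ * (Z - X))ᴴ := by
    rw [conjTranspose_mul, hZ.isHermitian.inv.eq, h.isHermitian.eq]
    simp only [Matrix.sub_mul, Matrix.mul_sub, Matrix.mul_assoc,
      nonsing_inv_mul_cancel_left _ _ hXu, mul_nonsing_inv _ hXu, mul_nonsing_inv _ hZu,
      nonsing_inv_mul _ hZu, Matrix.mul_one, Matrix.one_mul]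
    abel
  rw [key]
  exact (h.mul_mul_conjTranspose_same _).add (hX.posSemidef.inv.mul_mul_conjTranspose_same _)

end Matrix

/-- Loewner monotonicity of the Kalman prediction map: if `Y₁ ⪯ Y₂` are positive definite,
`A` invertible, `W ⪰ 0`, then `(A Y₁⁻¹ Aᵀ + W)⁻¹ ⪯ (A Y₂⁻¹ Aᵀ + W)⁻¹`. -/
theorem prediction_loewner_monotone {n : ℕ}
    (A W Y₁ Y₂ : Matrix (Fin n) (Fin n) ℝ)
    (hA : IsUnit A.det) (hW : W.PosSemidef)
    (hY₁ : Y₁.PosDef) (hY₂ : Y₂.PosDef) (hle : (Y₂ - Y₁).PosSemidef) :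
    ((A * Y₂⁻¹ * Aᵀ + W)⁻¹ - (A * Y₁⁻¹ * Aᵀ + W)⁻¹).PosSemidef := by
  have hAt : Aᵀ = Aᴴ := (conjTranspose_eq_transpose_of_trivial A).symm
  have hposDef {Y : Matrix (Fin n) (Fin n) ℝ} (hY : Y.PosDef) : (A * Y⁻¹ * Aᵀ + W).PosDef :=
    (((isUnit_iff_isUnit_det A).mpr hA).posDef_star_right_conjugate_iff.mpr hY.inv).add_posSemidef
      hW
  refine (hposDef hY₂).inv_sub_inv_posSemidef ?_
  rw [add_sub_add_right_eq_sub, ← Matrix.sub_mul, ← Matrix.mul_sub, hAt]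
  exact (hY₁.inv_sub_inv_posSemidef hle).mul_mul_conjTranspose_same A
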